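/- If the modal formula φ belongs to T_w for every world w of every mixed model ⟨W, R, {T_w}⟩ in MM(CPC,IPC), then φ is forced at every point of every concrete mixed model (soundness with respect to concrete mixed models). -/
import Mathlib


/-- Modal formulas of the language `Form_□`: ⊤, ⊥, propositional letters,
∧, ∨, →, and a unary modality □. -/
inductive Formula : Type
  | top : Formula
  | bot : Formula
  | var : ℕ → Formula
  | and : Formula → Formula → Formula
  | or : Formula → Formula → Formula
  | imp : Formula → Formula → Formula
  | box : Formula → Formula

/-- `¬φ` abbreviates `φ → ⊥`. -/
def Formula.neg (φ : Formula) : Formula := φ.imp Formula.bot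

/-- The standard intuitionistic propositional axiom schemes (over the modal language). -/
inductive IpcAxiom : Formula → Prop
  | a1 (A B : Formula) : IpcAxiom (A.imp (B.imp A))
  | a2 (A B C : Formula) :
      IpcAxiom ((A.imp B).imp ((A.imp (B.imp C)).imp (A.imp C)))
  | a3 (A B : Formula) : IpcAxiom (A.imp (A.or B))
  | a4 (A B : Formula) : IpcAxiom (B.imp (A.or B))
  | a5 (A B C : Formula) :
      IpcAxiom ((A.or B).imp ((A.imp C).imp ((B.imp C).imp C)))
  | a6 (A B : Formula) : IpcAxiom (A.imp (B.imp (A.and B)))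
  | a7 (A B : Formula) : IpcAxiom ((A.and B).imp A)
  | a8 (A B : Formula) : IpcAxiom ((A.and B).imp B)
  | a9 (A : Formula) : IpcAxiom (Formula.bot.imp A)

/-- The excluded-middle scheme `¬A ∨ A`. -/
inductive EmAxiom : Formula → Prop
  | em (A : Formula) : EmAxiom ((Formula.neg A).or A)

/-- No extra axioms. -/
def NoAxiom : Formula → Prop := fun _ => False

/-- Hilbert-style derivability from assumptions `Γ`, with the intuitionistic
axiom schemes, extra axiom schemes `ext`, and Modus Ponens as sole rule. -/
inductive Der (ext : Formula → Prop) (Γ : Set Formula) : Formula → Prop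
  | ax {φ : Formula} : IpcAxiom φ → Der ext Γ φ
  | extra {φ : Formula} : ext φ → Der ext Γ φ
  | hyp {φ : Formula} : φ ∈ Γ → Der ext Γ φ
  | mp {φ ψ : Formula} : Der ext Γ (φ.imp ψ) → Der ext Γ φ → Der ext Γ ψ

/-- `Γ ⊢_IPC φ` (intuitionistic propositional calculus over the modal language). -/
def DerIPC : Set Formula → Formula → Prop := Der NoAxiom

/-- `Γ ⊢_CPC φ` (classical propositional calculus = IPC + excluded middle). -/
def DerCPC : Set Formula → Formula → Prop := Der EmAxiom

/-- The Box Excluded Middle scheme `□A ∨ ¬□A`. -/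
inductive BemAxiom : Formula → Prop
  | bem (A : Formula) : BemAxiom ((Formula.box A).or (Formula.neg (Formula.box A)))

/-- Theorems of intuitionistic modal logic `iK` extended with the extra axiom
schemes `ext`: intuitionistic axioms, the distribution scheme, closed under
Modus Ponens and Necessitation. -/
inductive IK (ext : Formula → Prop) : Formula → Prop
  | ax {φ : Formula} : IpcAxiom φ → IK ext φ
  | extra {φ : Formula} : ext φ → IK ext φ
  | dist (φ ψ : Formula) :
      IK ext ((Formula.box (φ.imp ψ)).imp ((Formula.box φ).imp (Formula.box ψ)))
  | mp {φ ψ : Formula} : IK ext (φ.imp ψ) → IK ext φ → IK ext ψ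
  | nec {φ : Formula} : IK ext φ → IK ext (Formula.box φ)

/-- Theorems of `iK`. -/
def IKDer : Formula → Prop := IK NoAxiom

/-- Theorems of `iK + bem`. -/
def IKBem : Formula → Prop := IK BemAxiom

/-- Derivability from assumptions `Γ` over `iK+bem`: theorems of `iK+bem`,
members of `Γ`, closed under Modus Ponens. -/
inductive DerIKB (Γ : Set Formula) : Formula → Prop
  | thm {φ : Formula} : IKBem φ → DerIKB Γ φ
  | hyp {φ : Formula} : φ ∈ Γ → DerIKB Γ φ
  | mp {φ ψ : Formula} : DerIKB Γ (φ.imp ψ) → DerIKB Γ φ → DerIKB Γ ψ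

/-- A set of modal formulas is *prime* if it is deductively closed over
`iK+bem`, consistent, and has the disjunction property. -/
def PrimeSet (Γ : Set Formula) : Prop :=
  (∀ φ, DerIKB Γ φ → φ ∈ Γ) ∧ ¬ DerIKB Γ Formula.bot ∧
    (∀ φ ψ : Formula, φ.or ψ ∈ Γ → φ ∈ Γ ∨ ψ ∈ Γ)

/-- Forcing on birelational structures (data given unbundled):
intuitionistic clauses for the propositional connectives, and
`x ⊩ □φ` iff `y ⊩ φ` for all `y` with `x R y`. -/
def bforce {W : Type} (le R : W → W → Prop) (V : W → ℕ → Prop) :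
    Formula → W → Prop
  | Formula.top, _ => True
  | Formula.bot, _ => False
  | Formula.var p, x => V x p
  | Formula.and φ ψ, x => bforce le R V φ x ∧ bforce le R V ψ x
  | Formula.or φ ψ, x => bforce le R V φ x ∨ bforce le R V ψ x
  | Formula.imp φ ψ, x => ∀ y, le x y → bforce le R V φ y → bforce le R V ψ y
  | Formula.box φ, x => ∀ y, R x y → bforce le R V φ y

/-- Birelational models: a partial order `≤`, a modal relation `R`
satisfying the frame condition `x ≤ y ∧ y R z → x R z`, and a
`≤`-monotone valuation. -/
structure BirelModel where
  W : Type
  ne : Nonempty W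
  le : W → W → Prop
  R : W → W → Prop
  le_refl : ∀ x, le x x
  le_trans : ∀ {x y z}, le x y → le y z → le x z
  le_antisymm : ∀ {x y}, le x y → le y x → x = y
  frame : ∀ {x y z}, le x y → R y z → R x z
  V : W → ℕ → Prop
  mono : ∀ {x y p}, le x y → V x p → V y p

/-- Forcing in a birelational model. -/
def BirelModel.force (M : BirelModel) (φ : Formula) (x : M.W) : Prop :=
  bforce M.le M.R M.V φ x

/-- The `BEM` frame condition: `x ≤ y ∧ x R z → y R z`. -/
def BirelModel.BEM (M : BirelModel) : Prop :=
  ∀ x y z : M.W, M.le x y → M.R x z → M.R y z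

/-- Forcing on concrete mixed structures (data given unbundled):
`P` is the (disjoint) union of the domains of the intuitionistic models,
`world x` is the unique world `w` whose model contains `x`, `root w` is the
root `w̄`, `le` is the (disjoint) union of the intuitionistic orders, and
`R` is the modal accessibility between worlds.  The clauses are the
intuitionistic ones together with
`x ⊩ □φ` iff `v̄ ⊩ φ` for all `v` with `(world x) R v`. -/
def cforce {W P : Type} (world : P → W) (le : P → P → Prop)
    (R : W → W → Prop) (root : W → P) (V : P → ℕ → Prop) :
    Formula → P → Prop
  | Formula.top, _ => True
  | Formula.bot, _ => False
  | Formula.var p, x => V x p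
  | Formula.and φ ψ, x =>
      cforce world le R root V φ x ∧ cforce world le R root V ψ x
  | Formula.or φ ψ, x =>
      cforce world le R root V φ x ∨ cforce world le R root V ψ x
  | Formula.imp φ ψ, x =>
      ∀ y, le x y → cforce world le R root V φ y → cforce world le R root V ψ y
  | Formula.box φ, x => ∀ v, R (world x) v → cforce world le R root V φ (root v)

/-- Concrete mixed models: a Kripke frame `⟨W, R⟩` together with, for each
`w ∈ W`, a rooted intuitionistic Kripke model; the models have pairwise
disjoint domains, which is encoded by a type `P` of points together with the
map `world : P → W` sending each point to the world whose model contains it.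
The order `le` only relates points of the same model, is a partial order,
each model has a least element (its root), and the valuation is monotone. -/
structure CMM where
  W : Type
  P : Type
  ne : Nonempty W
  R : W → W → Prop
  world : P → W
  le : P → P → Prop
  le_world : ∀ {x y}, le x y → world x = world y
  le_refl : ∀ x, le x x
  le_trans : ∀ {x y z}, le x y → le y z → le x z
  le_antisymm : ∀ {x y}, le x y → le y x → x = y
  root : W → P
  root_world : ∀ w, world (root w) = w
  root_le : ∀ x, le (root (world x)) x
  V : P → ℕ → Prop
  mono : ∀ {x y p}, le x y → V x p → V y p

/-- Forcing in a concrete mixed model. -/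
def CMM.force (M : CMM) (φ : Formula) (x : M.P) : Prop :=
  cforce M.world M.le M.R M.root M.V φ x

/-- Mixed models in `MM(CPC, IPC)`: a Kripke frame `⟨W, R⟩` together with a
consistent theory `T w` for each world, closed under `⊢_{L_w}`-consequence for
some `L_w ∈ {CPC, IPC}`, where `□`- and `¬□`-formulas are evaluated by the
possible world semantics. -/
structure MixedModel where
  W : Type
  ne : Nonempty W
  R : W → W → Prop
  T : W → Set Formula
  consistent : ∀ w, Formula.bot ∉ T w
  closed : ∀ w, (∀ φ, DerCPC (T w) φ → φ ∈ T w) ∨ (∀ φ, DerIPC (T w) φ → φ ∈ T w)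
  box_mem : ∀ w φ, Formula.box φ ∈ T w ↔ ∀ v, R w v → φ ∈ T v
  negbox_mem : ∀ w φ, (Formula.box φ).neg ∈ T w ↔ ∃ v, R w v ∧ φ ∉ T v

lemma cforce_mono (M : CMM) : ∀ (ψ : Formula) {x y : M.P},
    M.le x y → M.force ψ x → M.force ψ y := by
  intro ψ
  induction ψ with
  | top => intro x y _ _; trivial
  | bot => intro x y _ hf; exact hf
  | var p => intro x y hle hf; exact M.mono hle hf
  | and a b iha ihb => intro x y hle hf; exact ⟨iha hle hf.1, ihb hle hf.2⟩
  | or a b iha ihb =>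
      intro x y hle hf
      cases hf with
      | inl hf => exact Or.inl (iha hle hf)
      | inr hf => exact Or.inr (ihb hle hf)
  | imp a b iha ihb =>
      intro x y hle hf z hz ha
      exact hf z (M.le_trans hle hz) ha
  | box a ih =>
      intro x y hle hf v hv
      exact hf v (by rwa [M.le_world hle])

lemma ax_force (M : CMM) {ψ : Formula} (hψ : IpcAxiom ψ) (x : M.P) :
    M.force ψ x := by
  cases hψ with
  | a1 A B => intro y _ ha z hz _; exact cforce_mono M A hz ha
  | a2 A B C =>
      intro y _ hab z hyz habc u hzu ha
      exact habc u hzu ha u (M.le_refl u) (hab u (M.le_trans hyz hzu) ha)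
  | a3 A B => intro y _ ha; exact Or.inl ha
  | a4 A B => intro y _ hb; exact Or.inr hb
  | a5 A B C =>
      intro y _ hab z hyz hac u hzu hbc
      cases hab with
      | inl ha => exact hac u hzu (cforce_mono M A (M.le_trans hyz hzu) ha)
      | inr hb => exact hbc u (M.le_refl u) (cforce_mono M B (M.le_trans hyz hzu) hb)
  | a6 A B => intro y _ ha z hz hb; exact ⟨cforce_mono M A hz ha, hb⟩
  | a7 A B => intro y _ hab; exact hab.1
  | a8 A B => intro y _ hab; exact hab.2
  | a9 A => intro y _ hf; exact hf.elim

lemma ipc_sound (M : CMM) {Γ : Set Formula} {ψ : Formula}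
    (h : DerIPC Γ ψ) (x : M.P) (hΓ : ∀ γ ∈ Γ, M.force γ x) : M.force ψ x := by
  induction h with
  | ax ha => exact ax_force M ha x
  | extra he => exact he.elim
  | hyp hm => exact hΓ _ hm
  | mp _ _ ih1 ih2 => exact ih1 x (M.le_refl x) ih2

/-- Soundness with respect to concrete mixed models: if `φ`
belongs to `T w` for every world `w` of every mixed model in `MM(CPC, IPC)`,
then `φ` is forced at every point of every concrete mixed model. -/
theorem mm_valid_implies_cmm_valid (φ : Formula)
    (h : ∀ (N : MixedModel) (w : N.W), φ ∈ N.T w) :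
    ∀ (M : CMM) (x : M.P), M.force φ x := by
  intro M x
  classical
  let N : MixedModel :=
    { W := M.W, ne := M.ne, R := M.R,
      T := fun w => {ψ | M.force ψ (M.root w)},
      consistent := fun w hb => hb,
      closed := fun w => Or.inr (fun ψ hψ => ipc_sound M hψ (M.root w) (fun γ hγ => hγ)),
      box_mem := by
        intro w ψ
        constructor
        · intro hb v hv
          exact hb v (by rw [M.root_world]; exact hv)
        · intro hall v hv
          exact hall v (by rwa [M.root_world] at hv)
      negbox_mem := by
        intro w ψ
        constructor
        · intro hn
          by_contra hc
          push_neg at hc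
          refine hn (M.root w) (M.le_refl _) ?_
          intro v hv
          exact hc v (by rwa [M.root_world] at hv)
        · rintro ⟨v, hv, hnv⟩ y hy hby
          exact hnv (hby v (by rw [← M.le_world hy, M.root_world]; exact hv)) }
  have hroot : M.force φ (M.root (M.world x)) := h N (M.world x)
  exact cforce_mono M φ (M.root_le x) hroot
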